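/- Suppose nr = (q^m−1)/s for positive integers m and s, and suppose {l_i : i ∈ Z_{n,r}} = {l, m} for a positive integer l with l < m and l ∣ m. If N_l = 1 and r ≤ 3, then 2(q−1)·δ^{(l)}_1 > q·N_m·r. -/

import Mathlib

open scoped Classical

/-- The `q`-cyclotomic coset of `i` modulo `N`, with representatives taken in `{1, …, N}`. -/
noncomputable def cosetOf (q N i : ℕ) : Finset ℕ :=
  (Finset.Icc 1 N).filter (fun x => ∃ j : ℕ, x ≡ i * q ^ j [MOD N])

/-- `Z_{n,r} = {1 + i r : 0 ≤ i ≤ n-1}`. -/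
def Zset (n r : ℕ) : Finset ℕ := (Finset.range n).image (fun i => 1 + i * r)

/-- The collection of `q`-cyclotomic cosets contained in `Z_{n,r}`. -/
noncomputable def cosetsIn (q n r : ℕ) : Finset (Finset ℕ) :=
  (Zset n r).image (fun i => cosetOf q (n * r) i)

/-- `N_l`: the number of `q`-cyclotomic cosets of size `l` contained in `Z_{n,r}`. -/
noncomputable def Ncount (q n r l : ℕ) : ℕ :=
  ((cosetsIn q n r).filter (fun C => C.card = l)).card

/-- Coset leader: the smallest element of a coset. -/
noncomputable def leader (C : Finset ℕ) : ℕ := sInf (C : Set ℕ)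

/-- The sorted (increasing) list of coset leaders of the cosets of size `l` in `Z_{n,r}`. -/
noncomputable def leaderList (q n r l : ℕ) : List ℕ :=
  Finset.sort (((cosetsIn q n r).filter (fun C => C.card = l)).image leader) (· ≤ ·)

/-- `δ_i^{(l)}`: the `i`-th smallest coset leader (1-indexed). -/
noncomputable def delta (q n r l i : ℕ) : ℕ := (leaderList q n r l).getD (i - 1) 0

/-!
Put `N = n r` and `a = q ^ l`, and let `C` be the unique coset of size `l` in `Z_{n,r}`.
The size of the coset of `x` is the minimal period of `x` under multiplication by `q` in
`ZMod N`, so an `x ∈ Z_{n,r}` with `x a ≡ x (mod N)` has coset size dividing `l` and lies in `C`;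
conversely every element of `C` is such a fixed point. With `e = N / gcd(N, a - 1)`, the fixed
points of `a` are multiples of `e`, so the `N / (r e)` numbers in `[1, N]` congruent to `δ` modulo
`r e` all lie in `C`. Hence `n r ≤ l r e ≤ l r δ`. Counting `Z_{n,r}` by cosets gives
`n = l + N_m m` with `m ≥ 2 l`, so `2 N_m < δ`, and `q r ≤ 4 (q - 1)` because `r ≤ 3` divides
`q - 1`.
-/

open Finset Function

section Cosets

variable {q N i x : ℕ}

lemma natCast_injOn_Icc : Set.InjOn (Nat.cast : ℕ → ZMod N) (Icc 1 N) := by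
  intro x hx y hy hxy
  simp only [coe_Icc, Set.mem_Icc] at hx hy
  refine ((ZMod.natCast_eq_natCast_iff x y N).1 hxy).eq_of_abs_lt ?_
  rw [abs_lt]
  omega

lemma exists_mem_Icc_natCast_eq [NeZero N] (z : ZMod N) : ∃ x ∈ Icc 1 N, (x : ZMod N) = z := by
  refine ⟨(z - 1).val + 1, ?_, by simp⟩
  have := (z - 1).val_lt
  rw [mem_Icc]
  omega

lemma mem_cosetOf :
    x ∈ cosetOf q N i ↔ x ∈ Icc 1 N ∧ ∃ j, (· * (q : ZMod N))^[j] i = x := by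
  simp only [cosetOf, mem_filter, mul_right_iterate_apply, ← ZMod.natCast_eq_natCast_iff,
    Nat.cast_mul, Nat.cast_pow, eq_comm]

lemma isPeriodicPt_mul_natCast_iff {t : ℕ} :
    IsPeriodicPt (· * (q : ZMod N)) t i ↔ i * q ^ t ≡ i [MOD N] := by
  rw [IsPeriodicPt, IsFixedPt, mul_right_iterate_apply, ← ZMod.natCast_eq_natCast_iff]
  push_cast
  rfl

variable [NeZero N] (hqN : q.Coprime N)
include hqN

lemma mem_periodicPts_mul_natCast (z : ZMod N) : z ∈ periodicPts (· * (q : ZMod N)) :=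
  (IsUnit.mul_left_injective ((ZMod.isUnit_iff_coprime q N).2 hqN)).mem_periodicPts z

lemma card_cosetOf : (cosetOf q N i).card = minimalPeriod (· * (q : ZMod N)) i := by
  set f : ZMod N → ZMod N := (· * (q : ZMod N))
  have himage : (cosetOf q N i).image (Nat.cast : ℕ → ZMod N) =
      (range (minimalPeriod f i)).image (f^[·] i) := by
    ext z
    obtain ⟨x, hx, rfl⟩ := exists_mem_Icc_natCast_eq z
    simp only [mem_image, mem_cosetOf, mem_range]
    constructor
    · rintro ⟨y, ⟨-, j, hj⟩, hyx⟩
      exact ⟨j % minimalPeriod f i, Nat.mod_lt _ (minimalPeriod_pos_of_mem_periodicPts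
        (mem_periodicPts_mul_natCast hqN _)), by rw [iterate_mod_minimalPeriod_eq, hj, hyx]⟩
    · rintro ⟨j, -, hj⟩
      exact ⟨x, ⟨hx, j, hj⟩, rfl⟩
  rw [← card_image_of_injOn (natCast_injOn_Icc.mono (by exact_mod_cast filter_subset _ _)),
    himage, card_image_of_injOn (by simpa using iterate_injOn_Iio_minimalPeriod), card_range]

lemma cosetOf_eq_of_mem (hx : x ∈ cosetOf q N i) : cosetOf q N x = cosetOf q N i := by
  obtain ⟨-, j, hj⟩ := mem_cosetOf.1 hx
  have hi := mem_periodicPts_mul_natCast hqN (i : ZMod N)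
  ext y
  simp only [mem_cosetOf, ← mem_periodicOrbit_iff hi,
    ← mem_periodicOrbit_iff (mem_periodicPts_mul_natCast hqN _), ← hj,
    periodicOrbit_apply_iterate_eq hi]

lemma mul_pow_card_cosetOf_modEq : i * q ^ (cosetOf q N i).card ≡ i [MOD N] := by
  rw [card_cosetOf hqN, ← isPeriodicPt_mul_natCast_iff]
  exact isPeriodicPt_minimalPeriod _ _

lemma card_cosetOf_dvd {t : ℕ} (h : i * q ^ t ≡ i [MOD N]) : (cosetOf q N i).card ∣ t := by
  rw [card_cosetOf hqN]
  exact (isPeriodicPt_mul_natCast_iff.2 h).minimalPeriod_dvd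

end Cosets

section Zset

variable {q n r x : ℕ}

lemma mem_Zset (hr : 0 < r) : x ∈ Zset n r ↔ x ∈ Icc 1 (n * r) ∧ x ≡ 1 [MOD r] := by
  simp only [Zset, mem_image, mem_range, mem_Icc]
  constructor
  · rintro ⟨i, hi, rfl⟩
    refine ⟨⟨by omega, by nlinarith⟩, ?_⟩
    simp [Nat.ModEq, Nat.add_mul_mod_self_right]
  · rintro ⟨⟨hx1, hxN⟩, hx⟩
    obtain ⟨i, hi⟩ := (Nat.modEq_iff_dvd' hx1).1 hx.symm
    refine ⟨i, ?_, by rw [mul_comm] at hi; omega⟩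
    by_contra! hni
    have := Nat.mul_le_mul_left r hni
    rw [mul_comm n r] at hxN
    omega

lemma card_Zset (hr : 0 < r) : (Zset n r).card = n := by
  rw [Zset, card_image_of_injective _ fun a b hab => by
    simpa [hr.ne'] using hab, card_range]

lemma cosetOf_subset_Zset (hr : 0 < r) (hqr : q ≡ 1 [MOD r]) {i : ℕ} (hi : i ∈ Zset n r) :
    cosetOf q (n * r) i ⊆ Zset n r := by
  intro x hx
  obtain ⟨hxI, j, hj⟩ := mem_filter.1 hx
  refine (mem_Zset hr).2 ⟨hxI, ?_⟩
  calc x ≡ i * q ^ j [MOD r] := hj.of_mul_left n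
    _ ≡ 1 * 1 ^ j [MOD r] := ((mem_Zset hr).1 hi).2.mul (hqr.pow j)
    _ = 1 := by ring

lemma card_Zset_eq_sum_card_cosetsIn [NeZero (n * r)] (hr : 0 < r) (hqr : q ≡ 1 [MOD r])
    (hqN : q.Coprime (n * r)) : n = ∑ C ∈ cosetsIn q n r, C.card := by
  have hunion : (cosetsIn q n r).biUnion id = Zset n r := by
    ext x
    simp only [mem_biUnion, cosetsIn, mem_image, id, exists_exists_and_eq_and]
    refine ⟨fun ⟨i, hi, hx⟩ => cosetOf_subset_Zset hr hqr hi hx, fun hx => ⟨x, hx, ?_⟩⟩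
    exact mem_cosetOf.2 ⟨((mem_Zset hr).1 hx).1, 0, rfl⟩
  have hdisj : (cosetsIn q n r : Set (Finset ℕ)).PairwiseDisjoint id := by
    simp only [cosetsIn, coe_image]
    rintro _ ⟨i, -, rfl⟩ _ ⟨j, -, rfl⟩ hne
    refine disjoint_left.2 fun x hxi hxj => hne ?_
    dsimp only [id] at hxi hxj ⊢
    rw [← cosetOf_eq_of_mem hqN hxi, cosetOf_eq_of_mem hqN hxj]
  calc n = (Zset n r).card := (card_Zset hr).symm
    _ = ∑ C ∈ cosetsIn q n r, C.card := by rw [← hunion, card_biUnion hdisj]; rfl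

end Zset

lemma sum_card_eq_of_card_eq_or_eq {α : Type*} (𝒞 : Finset (Finset α)) {l m : ℕ} (hlm : l ≠ m)
    (h : ∀ C ∈ 𝒞, C.card = l ∨ C.card = m) :
    ∑ C ∈ 𝒞, C.card = #{C ∈ 𝒞 | C.card = l} * l + #{C ∈ 𝒞 | C.card = m} * m := by
  have hfilter : {C ∈ 𝒞 | ¬C.card = l} = {C ∈ 𝒞 | C.card = m} :=
    filter_congr fun C hC => by rcases h C hC with h | h <;> simp [h, hlm, hlm.symm]
  rw [← sum_filter_add_sum_filter_not 𝒞 (·.card = l), hfilter,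
    sum_const_nat fun C hC => (mem_filter.1 hC).2, sum_const_nat fun C hC => (mem_filter.1 hC).2]

lemma le_card_filter_modEq {N M : ℕ} (hM : 0 < M) (hMN : M ∣ N) (a : ℕ) :
    N / M ≤ #{x ∈ Icc 1 N | x ≡ a [MOD M]} := by
  set b := (a + M - 1) % M + 1
  have hbM : b ≤ M := Nat.mod_lt _ hM
  have hba : b ≡ a [MOD M] :=
    calc b ≡ a + M - 1 + 1 [MOD M] := (Nat.mod_modEq _ _).add_right 1
      _ = a + M := by omega
      _ ≡ a [MOD M] := Nat.add_modEq_right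
  have hmaps : ∀ t ∈ range (N / M), b + t * M ∈ {x ∈ Icc 1 N | x ≡ a [MOD M]} := by
    intro t ht
    have : (t + 1) * M ≤ N / M * M := Nat.mul_le_mul_right M (mem_range.1 ht)
    rw [Nat.div_mul_cancel hMN] at this
    refine mem_filter.2 ⟨mem_Icc.2 ⟨by omega, by linarith⟩, ?_⟩
    exact (Nat.add_mul_mod_self_right b t M).trans hba
  calc N / M = #(range (N / M)) := (card_range _).symm
    _ ≤ _ := card_le_card_of_injOn _ hmaps fun s _ t _ hst =>
      Nat.eq_of_mul_eq_mul_right hM (by simpa using hst)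

lemma mul_modEq_self_iff_dvd {N a y : ℕ} (ha : 0 < a) : y * a ≡ y [MOD N] ↔ N ∣ y * (a - 1) := by
  rw [Nat.ModEq.comm, Nat.modEq_iff_dvd' (Nat.le_mul_of_pos_right y ha), Nat.mul_sub_one]

lemma div_gcd_dvd_of_dvd_mul {N y b : ℕ} (hN : 0 < N) (h : N ∣ y * b) : N / N.gcd b ∣ y :=
  Nat.modEq_zero_iff_dvd.1 <| Nat.ModEq.cancel_right_div_gcd hN <| by
    simpa [Nat.modEq_zero_iff_dvd] using h

section FixedPoints

variable {q n r x : ℕ}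

def fixedZset (a n r : ℕ) : Finset ℕ := {y ∈ Zset n r | y * a ≡ y [MOD n * r]}

lemma mem_fixedZset {a y : ℕ} :
    y ∈ fixedZset a n r ↔ y ∈ Zset n r ∧ y * a ≡ y [MOD n * r] :=
  mem_filter

theorem le_mul_card_fixedZset {a : ℕ} (hr : 0 < r) (ha : 0 < a) (har : a ≡ 1 [MOD r])
    (hx : x ∈ fixedZset a n r) : n ≤ x * #(fixedZset a n r) := by
  obtain ⟨hxZ, hxa⟩ := mem_fixedZset.1 hx
  obtain ⟨hxI, hx1⟩ := (mem_Zset hr).1 hxZ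
  obtain ⟨hxpos, hxN⟩ := mem_Icc.1 hxI
  set N := n * r
  set g := N.gcd (a - 1)
  set e := N / g
  have hN : N = g * e := (Nat.mul_div_cancel' (Nat.gcd_dvd_left _ _)).symm
  have hex : e ∣ x := div_gcd_dvd_of_dvd_mul (by omega) ((mul_modEq_self_iff_dvd ha).1 hxa)
  have hrg : r ∣ g := Nat.dvd_gcd (Dvd.intro_left n rfl) ((Nat.modEq_iff_dvd' ha).1 har.symm)
  have hreN : r * e ∣ N := hN ▸ Nat.mul_dvd_mul_right hrg e
  have hsub : {y ∈ Icc 1 N | y ≡ x [MOD r * e]} ⊆ fixedZset a n r := by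
    intro y hy
    obtain ⟨hyI, hyx⟩ := mem_filter.1 hy
    have hey : e ∣ y := (Nat.ModEq.dvd_iff (hyx.of_mul_left r) dvd_rfl).2 hex
    refine mem_fixedZset.2 ⟨(mem_Zset hr).2 ⟨hyI, (hyx.of_mul_right e).trans hx1⟩, ?_⟩
    rw [mul_modEq_self_iff_dvd ha]
    change N ∣ _
    rw [hN, mul_comm g]
    exact Nat.mul_dvd_mul hey (Nat.gcd_dvd_right _ _)
  have hre : 0 < r * e := Nat.mul_pos hr (Nat.pos_of_dvd_of_pos hex hxpos)
  have hcount := (le_card_filter_modEq hre hreN x).trans (card_le_card hsub)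
  have : n * r ≤ x * #(fixedZset a n r) * r :=
    calc n * r = N / (r * e) * (r * e) := (Nat.div_mul_cancel hreN).symm
      _ ≤ #(fixedZset a n r) * (r * x) :=
        Nat.mul_le_mul hcount (Nat.mul_le_mul_left r (Nat.le_of_dvd hxpos hex))
      _ = x * #(fixedZset a n r) * r := by ring
  exact Nat.le_of_mul_le_mul_right this hr

theorem le_mul_of_mem_unique_coset [NeZero (n * r)] {l : ℕ} {C : Finset ℕ} (hq : 0 < q)
    (hr : 0 < r) (hqr : q ≡ 1 [MOD r]) (hqN : q.Coprime (n * r)) (hl : 0 < l)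
    (hsizes : ∀ C ∈ cosetsIn q n r, C.card = l ∨ l < C.card)
    (hC : {C ∈ cosetsIn q n r | C.card = l} = {C}) (hx : x ∈ C) : n ≤ x * l := by
  obtain ⟨hCin, hCl⟩ := mem_filter.1 (hC ▸ mem_singleton_self C)
  obtain ⟨i, hi, rfl⟩ := mem_image.1 hCin
  have hfixed : fixedZset (q ^ l) n r ⊆ cosetOf q (n * r) i := by
    intro y hy
    obtain ⟨hyZ, hyl⟩ := mem_fixedZset.1 hy
    have hyC : cosetOf q (n * r) y ∈ {C ∈ cosetsIn q n r | C.card = l} := by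
      have hyin : cosetOf q (n * r) y ∈ cosetsIn q n r := mem_image_of_mem _ hyZ
      have := Nat.le_of_dvd hl (card_cosetOf_dvd hqN hyl)
      exact mem_filter.2 ⟨hyin, (hsizes _ hyin).resolve_right (by omega)⟩
    rw [hC, mem_singleton] at hyC
    exact hyC ▸ mem_cosetOf.2 ⟨((mem_Zset hr).1 hyZ).1, 0, rfl⟩
  have hx_fixed : x ∈ fixedZset (q ^ l) n r := by
    refine mem_fixedZset.2 ⟨cosetOf_subset_Zset hr hqr hi hx, ?_⟩
    simpa [cosetOf_eq_of_mem hqN hx, hCl] using mul_pow_card_cosetOf_modEq hqN (i := x)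
  calc n ≤ x * #(fixedZset (q ^ l) n r) :=
        le_mul_card_fixedZset hr (pow_pos hq l) (by simpa using hqr.pow l) hx_fixed
    _ ≤ x * l := Nat.mul_le_mul_left x ((card_le_card hfixed).trans_eq hCl)

end FixedPoints

lemma delta_one_mem {q n r l : ℕ} {C : Finset ℕ} (hl : 0 < l)
    (hC : {C ∈ cosetsIn q n r | C.card = l} = {C}) : delta q n r l 1 ∈ C := by
  have hCmem : C ∈ {C ∈ cosetsIn q n r | C.card = l} := hC ▸ mem_singleton_self C
  have hCl : C.card = l := (mem_filter.1 hCmem).2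
  rw [delta, leaderList, hC, image_singleton, sort_singleton]
  exact Nat.sInf_mem (coe_nonempty.2 (card_pos.1 (hCl ▸ hl)))

theorem stmt7_general (q n r m l : ℕ) (hq : IsPrimePow q) (hn : 0 < n) (hco : Nat.Coprime n q)
    (hr : 0 < r) (hrdvd : r ∣ q - 1)
    (hl : 0 < l) (hlm : l < m) (hldvd : l ∣ m)
    (hset : (Zset n r).image (fun i => (cosetOf q (n * r) i).card) = {l, m})
    (hNl : Ncount q n r l = 1) (hr3 : r ≤ 3) :
    q * Ncount q n r m * r < 2 * (q - 1) * delta q n r l 1 := by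
  have : NeZero (n * r) := ⟨(Nat.mul_pos hn hr).ne'⟩
  have hq2 : 2 ≤ q := hq.two_le
  have hqr : q ≡ 1 [MOD r] := ((Nat.modEq_iff_dvd' (by omega)).2 hrdvd).symm
  have hqN : q.Coprime (n * r) :=
    Nat.Coprime.mul_right hco.symm (hqr.gcd_eq.trans (Nat.gcd_one_left r))
  have hsizes : ∀ C ∈ cosetsIn q n r, C.card = l ∨ C.card = m := by
    intro C hC
    obtain ⟨i, hi, rfl⟩ := mem_image.1 hC
    simpa [hset] using mem_image_of_mem (fun i => (cosetOf q (n * r) i).card) hi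
  have hn_eq : n = l + Ncount q n r m * m := by
    have := (card_Zset_eq_sum_card_cosetsIn hr hqr hqN).trans
      (sum_card_eq_of_card_eq_or_eq _ hlm.ne hsizes)
    rwa [← Ncount, ← Ncount, hNl, one_mul] at this
  obtain ⟨C, hC⟩ := card_eq_one.1 hNl
  have hδ : n ≤ delta q n r l 1 * l :=
    le_mul_of_mem_unique_coset (by omega) hr hqr hqN hl
      (fun C hC => (hsizes C hC).imp_right fun h => by omega) hC (delta_one_mem hl hC)
  have h2l : 2 * l ≤ m := by
    obtain ⟨k, rfl⟩ := hldvd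
    have : 1 < k := Nat.lt_of_mul_lt_mul_left (a := l) (by simpa using hlm)
    nlinarith
  have hqr_le : q * r ≤ 4 * (q - 1) := by
    obtain ⟨t, ht⟩ := hrdvd
    interval_cases r <;> omega
  have hNm : 2 * Ncount q n r m < delta q n r l 1 := by
    nlinarith [Nat.mul_le_mul_left (Ncount q n r m) h2l]
  calc q * Ncount q n r m * r = q * r * Ncount q n r m := by ring
    _ ≤ 4 * (q - 1) * Ncount q n r m := Nat.mul_le_mul_right _ hqr_le
    _ = 2 * (q - 1) * (2 * Ncount q n r m) := by ring
    _ < 2 * (q - 1) * delta q n r l 1 := Nat.mul_lt_mul_of_pos_left hNm (by omega)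

theorem stmt7 (q n r m s l : ℕ) (hq : IsPrimePow q) (hn : 0 < n) (hco : Nat.Coprime n q)
    (hr : 0 < r) (hrdvd : r ∣ q - 1) (hm : 0 < m) (hs : 0 < s)
    (hnrs : n * r * s = q ^ m - 1)
    (hl : 0 < l) (hlm : l < m) (hldvd : l ∣ m)
    (hset : (Zset n r).image (fun i => (cosetOf q (n * r) i).card) = {l, m})
    (hNl : Ncount q n r l = 1) (hr3 : r ≤ 3) :
    q * Ncount q n r m * r < 2 * (q - 1) * delta q n r l 1 :=
  stmt7_general q n r m l hq hn hco hr hrdvd hl hlm hldvd hset hNl hr3
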